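/- arXiv:0802.2734 — 6 statements merged into one kernel-verified Lean document; each statement's English description precedes it below -/
import Mathlib

section
/- Let ℋ be a complex inner product space, let N ∈ ℕ, and let v : ℕ → ℋ satisfy ‖v_n‖ ≤ 1 for 1 ≤ n ≤ N and v_n = 0 for n > N. Then for every integer H with 1 ≤ H ≤ N, ‖(1/N)·Σ_{n=1}^{N} v_n‖² ≤ 4·( 1/H + H/N + (1/H)·Σ_{h=1}^{H} | (1/N)·Σ_{n=1}^{N} ⟨v_{n+h}, v_n⟩ | ). -/
/-!
Averaging over `H` shifts, `H • ∑ₖ a k = ∑ₙ uₙ` with `uₙ = ∑_{0 ≤ h < H} a (n - h)`, a sum of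
`N + H` window vectors, so Cauchy–Schwarz gives `H² ‖∑ₖ a k‖² ≤ (N + H) ∑ₙ ‖uₙ‖²`. Expanding the
squares, `∑ₙ ‖uₙ‖²` is a sum of the autocorrelations `γ (h' - h)` in which every lag occurs at most
`H` times. As `γ (-d) = conj (γ d)` and `‖γ 0‖ ≤ N`, this yields
`H² ‖∑ₖ a k‖² ≤ (N + H) H (N + 2 ∑_{d=1}^{H} ‖γ d‖)`, and `H ≤ N` turns it into the stated bound.
-/

open Finset
open scoped InnerProductSpace

theorem sum_comp_add_eq_sum_of_vanishing {G M : Type*} [AddGroup G] [AddCommMonoid M]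
    {f : G → M} {s t : Finset G} (d : G) (hs : ∀ k ∉ s, f k = 0)
    (ht : ∀ k ∉ t, f (k + d) = 0) : ∑ k ∈ t, f (k + d) = ∑ k ∈ s, f k := by
  rw [← finsum_eq_finsetSum_of_support_subset _ (Function.support_subset_iff'.2 ht),
    ← finsum_eq_finsetSum_of_support_subset _ (Function.support_subset_iff'.2 hs)]
  exact finsum_comp_equiv (Equiv.addRight d)

theorem sum_Ioo_neg_eq_of_even {M : Type*} [AddCommMonoid M] {g : ℤ → M}
    (hg : ∀ d, g (-d) = g d) {n : ℤ} (hn : 0 < n) :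
    ∑ d ∈ Ioo (-n) n, g d = g 0 + 2 • ∑ d ∈ Ioo 0 n, g d := by
  have hsplit : Ioo (-n) n = Ioo (-n) 0 ∪ insert 0 (Ioo 0 n) := by
    ext d; simp only [mem_union, mem_insert, mem_Ioo]; omega
  have hreflect : ∑ d ∈ Ioo (-n) 0, g d = ∑ d ∈ Ioo 0 n, g d :=
    sum_nbij' Neg.neg Neg.neg (fun d hd => by simp at hd ⊢; omega)
      (fun d hd => by simp at hd ⊢; omega) (by simp) (by simp) (by simp [hg])
  rw [hsplit, sum_union (disjoint_left.2 (by simp; omega)), sum_insert (by simp), hreflect]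
  abel

theorem sum_Icc_natCast {M : Type*} [AddCommMonoid M] (f : ℤ → M) (m n : ℕ) :
    ∑ k ∈ Icc (m : ℤ) n, f k = ∑ i ∈ Icc m n, f i :=
  sum_nbij' Int.toNat Nat.cast (fun k hk => by simp at hk ⊢; omega)
    (fun i hi => by simpa using hi) (fun k hk => by simp at hk ⊢; omega) (fun i _ => by simp)
    (fun k hk => by simp at hk; congr; omega)

theorem sum_sum_comp_sub_le {g : ℤ → ℝ} (hg : ∀ d, 0 ≤ g d) (H : ℕ) :
    ∑ h ∈ Ico (0 : ℤ) H, ∑ h' ∈ Ico (0 : ℤ) H, g (h' - h) ≤ H * ∑ d ∈ Ioo (-H : ℤ) H, g d := by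
  calc ∑ h ∈ Ico (0 : ℤ) H, ∑ h' ∈ Ico (0 : ℤ) H, g (h' - h)
      ≤ ∑ _h ∈ Ico (0 : ℤ) H, ∑ d ∈ Ioo (-H : ℤ) H, g d := by
        refine sum_le_sum fun h hh => ?_
        simp_rw [sub_eq_add_neg, sum_Ico_add']
        exact sum_le_sum_of_subset_of_nonneg (fun d => by simp at hh ⊢; omega) fun d _ _ => hg d
    _ = H * ∑ d ∈ Ioo (-H : ℤ) H, g d := by simp

theorem norm_sum_sq_le_card_mul {ι E : Type*} [SeminormedAddCommGroup E] (s : Finset ι)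
    (u : ι → E) : ‖∑ i ∈ s, u i‖ ^ 2 ≤ #s * ∑ i ∈ s, ‖u i‖ ^ 2 :=
  (pow_le_pow_left₀ (norm_nonneg _) (norm_sum_le s u) 2).trans sq_sum_le_card_mul_sum_sq

section VanDerCorput

variable (𝕜 : Type*) {E : Type*} [RCLike 𝕜] [NormedAddCommGroup E] [InnerProductSpace 𝕜 E]

noncomputable def autocorrelation (a : ℤ → E) (N : ℕ) (d : ℤ) : 𝕜 :=
  ∑ k ∈ Icc (1 : ℤ) N, ⟪a (k + d), a k⟫_𝕜

variable {𝕜} {a : ℤ → E} {N : ℕ}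

theorem autocorrelation_neg (ha : ∀ k ∉ Icc (1 : ℤ) N, a k = 0) (d : ℤ) :
    autocorrelation 𝕜 a N (-d) = starRingEnd 𝕜 (autocorrelation 𝕜 a N d) := by
  have hshift := sum_comp_add_eq_sum_of_vanishing (f := fun k => ⟪a k, a (k + d)⟫_𝕜)
    (s := Icc (1 : ℤ) N) (t := Icc (1 : ℤ) N) (-d)
    (fun k hk => by simp [ha k hk]) (fun k hk => by simp [ha k hk])
  simp only [neg_add_cancel_right] at hshift
  simpa only [autocorrelation, map_sum, inner_conj_symm] using hshift

theorem norm_autocorrelation_zero_le (ha1 : ∀ k, ‖a k‖ ≤ 1) :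
    ‖autocorrelation 𝕜 a N 0‖ ≤ N := by
  calc ‖autocorrelation 𝕜 a N 0‖ ≤ ∑ k ∈ Icc (1 : ℤ) N, ‖a k‖ * ‖a k‖ := by
        simp only [autocorrelation, add_zero]
        exact (norm_sum_le _ _).trans (sum_le_sum fun k _ => norm_inner_le_norm _ _)
    _ ≤ ∑ k ∈ Icc (1 : ℤ) N, 1 := sum_le_sum fun k _ => by
        nlinarith [ha1 k, norm_nonneg (a k)]
    _ = N := by simp

variable {H : ℕ}

theorem apply_sub_eq_zero_of_notMem_window (ha : ∀ k ∉ Icc (1 : ℤ) N, a k = 0) {n h : ℤ}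
    (hh : h ∈ Ico (0 : ℤ) H) (hn : n ∉ Ico (0 : ℤ) (N + H)) : a (n - h) = 0 :=
  ha _ fun hmem => hn (by simp at hh hmem ⊢; omega)

theorem sum_window_sum_sub (ha : ∀ k ∉ Icc (1 : ℤ) N, a k = 0) :
    ∑ n ∈ Ico (0 : ℤ) (N + H), ∑ h ∈ Ico (0 : ℤ) H, a (n - h) = H • ∑ k ∈ Icc (1 : ℤ) N, a k := by
  rw [sum_comm]
  calc ∑ h ∈ Ico (0 : ℤ) H, ∑ n ∈ Ico (0 : ℤ) (N + H), a (n - h)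
      = ∑ _h ∈ Ico (0 : ℤ) H, ∑ k ∈ Icc (1 : ℤ) N, a k := sum_congr rfl fun h hh =>
        sum_comp_add_eq_sum_of_vanishing (-h) ha
          fun n hn => apply_sub_eq_zero_of_notMem_window ha hh hn
    _ = H • ∑ k ∈ Icc (1 : ℤ) N, a k := by simp

theorem sum_window_inner (ha : ∀ k ∉ Icc (1 : ℤ) N, a k = 0) (h : ℤ) {h' : ℤ}
    (hh' : h' ∈ Ico (0 : ℤ) H) :
    ∑ n ∈ Ico (0 : ℤ) (N + H), ⟪a (n - h), a (n - h')⟫_𝕜 = autocorrelation 𝕜 a N (h' - h) := by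
  have hshift := sum_comp_add_eq_sum_of_vanishing (f := fun k => ⟪a (k + (h' - h)), a k⟫_𝕜)
    (s := Icc (1 : ℤ) N) (t := Ico (0 : ℤ) (N + H)) (-h')
    (fun k hk => by simp [ha k hk])
    (fun n hn => by simp [← sub_eq_add_neg, apply_sub_eq_zero_of_notMem_window ha hh' hn])
  simpa [autocorrelation, ← sub_eq_add_neg] using hshift

theorem sum_window_norm_sq (ha : ∀ k ∉ Icc (1 : ℤ) N, a k = 0) :
    ∑ n ∈ Ico (0 : ℤ) (N + H), ‖∑ h ∈ Ico (0 : ℤ) H, a (n - h)‖ ^ 2 =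
      RCLike.re (∑ h ∈ Ico (0 : ℤ) H, ∑ h' ∈ Ico (0 : ℤ) H, autocorrelation 𝕜 a N (h' - h)) := by
  simp_rw [← inner_self_eq_norm_sq (𝕜 := 𝕜), sum_inner, inner_sum]
  rw [← map_sum, sum_comm]
  refine congrArg _ (sum_congr rfl fun h _ => ?_)
  rw [sum_comm]
  exact sum_congr rfl fun h' hh' => sum_window_inner ha h hh'

theorem sq_mul_norm_sum_sq_le (ha : ∀ k ∉ Icc (1 : ℤ) N, a k = 0) :
    (H : ℝ) ^ 2 * ‖∑ k ∈ Icc (1 : ℤ) N, a k‖ ^ 2 ≤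
      (N + H) * H * ∑ d ∈ Ioo (-H : ℤ) H, ‖autocorrelation 𝕜 a N d‖ := by
  calc (H : ℝ) ^ 2 * ‖∑ k ∈ Icc (1 : ℤ) N, a k‖ ^ 2
      = ‖∑ n ∈ Ico (0 : ℤ) (N + H), ∑ h ∈ Ico (0 : ℤ) H, a (n - h)‖ ^ 2 := by
        rw [sum_window_sum_sub ha, RCLike.norm_nsmul 𝕜, nsmul_eq_mul, mul_pow]
    _ ≤ (N + H) * ∑ n ∈ Ico (0 : ℤ) (N + H), ‖∑ h ∈ Ico (0 : ℤ) H, a (n - h)‖ ^ 2 := by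
        have hcard : (#(Ico (0 : ℤ) (N + H)) : ℝ) = N + H := by
          rw [Int.card_Ico, sub_zero]; norm_cast
        exact hcard ▸ norm_sum_sq_le_card_mul _ _
    _ ≤ (N + H) * ∑ h ∈ Ico (0 : ℤ) H, ∑ h' ∈ Ico (0 : ℤ) H, ‖autocorrelation 𝕜 a N (h' - h)‖ := by
        rw [sum_window_norm_sq (𝕜 := 𝕜) ha]
        gcongr
        refine (RCLike.re_le_norm _).trans ((norm_sum_le _ _).trans (sum_le_sum fun h _ => ?_))
        exact norm_sum_le _ _
    _ ≤ (N + H) * (H * ∑ d ∈ Ioo (-H : ℤ) H, ‖autocorrelation 𝕜 a N d‖) := by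
        gcongr
        exact sum_sum_comp_sub_le (fun _ => norm_nonneg _) H
    _ = (N + H) * H * ∑ d ∈ Ioo (-H : ℤ) H, ‖autocorrelation 𝕜 a N d‖ := by ring

theorem sq_mul_norm_sum_sq_le_of_norm_le_one (ha : ∀ k ∉ Icc (1 : ℤ) N, a k = 0)
    (ha1 : ∀ k, ‖a k‖ ≤ 1) (hH : 0 < H) :
    (H : ℝ) ^ 2 * ‖∑ k ∈ Icc (1 : ℤ) N, a k‖ ^ 2 ≤
      (N + H) * H * (N + 2 * ∑ d ∈ Icc (1 : ℤ) H, ‖autocorrelation 𝕜 a N d‖) := by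
  have heven (d : ℤ) : ‖autocorrelation 𝕜 a N (-d)‖ = ‖autocorrelation 𝕜 a N d‖ := by
    rw [autocorrelation_neg ha, RCLike.norm_conj]
  refine (sq_mul_norm_sum_sq_le (𝕜 := 𝕜) ha).trans ?_
  rw [sum_Ioo_neg_eq_of_even heven (by omega), nsmul_eq_mul, Nat.cast_ofNat]
  gcongr
  · exact norm_autocorrelation_zero_le ha1
  · exact fun d => by simp only [mem_Ioo, mem_Icc]; omega

end VanDerCorput

theorem sq_inv_mul_le_of_sq_mul_sq_le {s Γ H N : ℝ} (hΓ : 0 ≤ Γ) (hH : 1 ≤ H) (hHN : H ≤ N)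
    (h : H ^ 2 * s ^ 2 ≤ (N + H) * H * (N + 2 * Γ)) :
    (N⁻¹ * s) ^ 2 ≤ 4 * (H⁻¹ + H / N + H⁻¹ * (N⁻¹ * Γ)) := by
  have hs : H * s ^ 2 ≤ (N + H) * (N + 2 * Γ) :=
    le_of_mul_le_mul_left (a := H) (by nlinarith) (by linarith)
  have hN : 0 < N := by linarith
  rw [mul_pow, inv_pow, ← div_eq_inv_mul, div_le_iff₀ (by positivity)]
  field_simp
  nlinarith [mul_le_mul_of_nonneg_left hHN hΓ,
    mul_le_mul_of_nonneg_left hH (by linarith : (0 : ℝ) ≤ H)]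

theorem stmt_9_general {𝓗 : Type*} [NormedAddCommGroup 𝓗] [InnerProductSpace ℂ 𝓗]
    (N : ℕ) (v : ℕ → 𝓗)
    (hv1 : ∀ n : ℕ, 1 ≤ n → n ≤ N → ‖v n‖ ≤ 1)
    (hv2 : ∀ n : ℕ, N < n → v n = 0) :
    ∀ H : ℕ, 1 ≤ H → H ≤ N →
      ‖(N : ℝ)⁻¹ • ∑ n ∈ Finset.Icc 1 N, v n‖ ^ 2 ≤
        4 * ((H : ℝ)⁻¹ + (H : ℝ) / N +
          (H : ℝ)⁻¹ * ∑ h ∈ Finset.Icc 1 H,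
            ‖(N : ℂ)⁻¹ * ∑ n ∈ Finset.Icc 1 N,
              (inner ℂ (v (n + h)) (v n) : ℂ)‖) := by
  intro H hH hHN
  set a : ℤ → 𝓗 := fun k => if 0 < k then v k.toNat else 0
  have ha : ∀ k ∉ Icc (1 : ℤ) N, a k = 0 := fun k hk => by
    simp only [mem_Icc, not_and_or, not_le] at hk
    by_cases hk0 : 0 < k
    · simp only [a, if_pos hk0]; exact hv2 _ (by omega)
    · simp only [a, if_neg hk0]
  have ha1 : ∀ k, ‖a k‖ ≤ 1 := fun k => by
    by_cases hk : 0 < k ∧ k ≤ N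
    · simp only [a, if_pos hk.1]; exact hv1 _ (by omega) (by omega)
    · simp [ha k (by simp only [mem_Icc]; omega)]
  have ha_natCast (m : ℕ) (hm : 0 < m) : a m = v m := by simp [a, hm]
  have hsum : ∑ k ∈ Icc (1 : ℤ) N, a k = ∑ n ∈ Icc 1 N, v n := by
    rw [← Nat.cast_one, sum_Icc_natCast]
    exact sum_congr rfl fun n hn => ha_natCast n (by simp at hn; omega)
  have hcorr : ∑ d ∈ Icc (1 : ℤ) H, ‖autocorrelation ℂ a N d‖ =
      ∑ h ∈ Icc 1 H, ‖∑ n ∈ Icc 1 N, (inner ℂ (v (n + h)) (v n) : ℂ)‖ := by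
    rw [← Nat.cast_one, sum_Icc_natCast]
    refine sum_congr rfl fun h hh => congrArg _ ?_
    rw [autocorrelation, ← Nat.cast_one, sum_Icc_natCast]
    refine sum_congr rfl fun n hn => ?_
    simp only [mem_Icc] at hh hn
    rw [← Nat.cast_add, ha_natCast _ (by omega), ha_natCast _ (by omega)]
  have key := sq_mul_norm_sum_sq_le_of_norm_le_one (𝕜 := ℂ) ha ha1 (H := H) (by omega)
  rw [hsum, hcorr] at key
  simp only [norm_smul, norm_mul, norm_inv, Real.norm_natCast, Complex.norm_natCast, ← mul_sum]
  exact sq_inv_mul_le_of_sq_mul_sq_le (sum_nonneg fun _ _ => norm_nonneg _)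
    (by exact_mod_cast hH) (by exact_mod_cast hHN) key

/-- The Hilbert space version of van der Corput's estimate (Lemma 4.1 of the paper). -/
theorem stmt_9 {𝓗 : Type*} [NormedAddCommGroup 𝓗] [InnerProductSpace ℂ 𝓗]
    (N : ℕ) (hN : 1 ≤ N) (v : ℕ → 𝓗)
    (hv1 : ∀ n : ℕ, 1 ≤ n → n ≤ N → ‖v n‖ ≤ 1)
    (hv2 : ∀ n : ℕ, N < n → v n = 0) :
    ∀ H : ℕ, 1 ≤ H → H ≤ N →
      ‖(N : ℝ)⁻¹ • ∑ n ∈ Finset.Icc 1 N, v n‖ ^ 2 ≤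
        4 * ((H : ℝ)⁻¹ + (H : ℝ) / N +
          (H : ℝ)⁻¹ * ∑ h ∈ Finset.Icc 1 H,
            ‖(N : ℂ)⁻¹ * ∑ n ∈ Finset.Icc 1 N,
              (inner ℂ (v (n + h)) (v n) : ℂ)‖) :=
  stmt_9_general N v hv1 hv2
end

section
/- Let k < l be integers, let ρ > 0, and let f be a real-valued function that is twice differentiable on [k, l] and satisfies either f''(x) ≥ ρ for all x ∈ [k, l] or f''(x) ≤ −ρ for all x ∈ [k, l]. Then |Σ_{n=k}^{l} e(f(n))| ≤ (|f'(l) − f'(k)| + 2)·(4/√ρ + 3). -/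
/-!
Group the `n ∈ [k, l]` by the integer `m` nearest to `f'(n)`. Since `f'` grows at rate at least
`ρ`, at most `|f'(l) - f'(k)| + 2` values of `m` occur, and each class is a block of consecutive
integers. Put `δ = √ρ`. In a block, the points with `|f'(n) - m| ≤ δ` number at most `2δ/ρ + 1`.
On each of the two remaining sub-blocks the increments `f(n+1) - f(n)` lie between `f'(n)` and
`f'(n+1)`, so they are monotone and at distance at least `δ` from the integers, and the
Kusmin–Landau inequality bounds the sum by `1 + 1/δ`. A block thus contributes at most
`2(1 + 1/δ) + 2δ/ρ + 1 = 4/√ρ + 3`.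

Kusmin–Landau: with `t = F(i+1) - F(i) - c` one has
`e(F i) = (1/2 + I cot(πt)/2) (e(F i) - e(F(i+1)))`, and Abel summation against the monotone
sequence `cot(πt)/2`, which is bounded by `1/(4δ)`, gives `1 + 1/δ`.
The case `f'' ≤ -ρ` follows by complex conjugation.
-/

open Real Set Finset
open Complex (I)

theorem Real.two_mul_le_sin_pi_mul {δ t : ℝ} (hδ : 0 ≤ δ) (ht : t ∈ Set.Icc δ (1 - δ)) :
    2 * δ ≤ sin (π * t) := by
  wlog h : t ≤ 1 / 2 generalizing t
  · rw [← sin_pi_sub, show π - π * t = π * (1 - t) by ring]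
    exact this ⟨by linarith [ht.2], by linarith [ht.1]⟩ (by linarith)
  have := le_sin_mul (x := 2 * t) (by linarith [ht.1]) (by linarith)
  rw [show π / 2 * (2 * t) = π * t by ring] at this
  linarith [ht.1]

theorem Real.cot_le_cot {a b : ℝ} (ha : 0 < a) (hab : a ≤ b) (hb : b < π) : cot b ≤ cot a := by
  have hsa : 0 < Real.sin a := sin_pos_of_pos_of_lt_pi ha (hab.trans_lt hb)
  have hsb : 0 < Real.sin b := sin_pos_of_pos_of_lt_pi (ha.trans_le hab) hb
  have hsub : 0 ≤ sin (b - a) :=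
    sin_nonneg_of_nonneg_of_le_pi (by linarith) (by linarith)
  rw [sin_sub] at hsub
  rw [cot_eq_cos_div_sin, cot_eq_cos_div_sin, div_le_div_iff₀ hsb hsa]
  linarith

theorem Real.abs_cot_le {a : ℝ} (ha : 0 < Real.sin a) : |cot a| ≤ 1 / Real.sin a := by
  rw [cot_eq_cos_div_sin, abs_div, abs_of_pos ha]
  exact div_le_div_of_nonneg_right (abs_cos_le_one a) ha.le

theorem round_monotone : Monotone (round : ℝ → ℤ) := fun x y hxy ↦ by
  simp only [round_eq]
  exact Int.floor_mono (by linarith)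

theorem card_Icc_round_le (x y : ℝ) : (#(Finset.Icc (round x) (round y)) : ℝ) ≤ |y - x| + 2 := by
  rw [Int.card_Icc]
  rcases le_total 0 (round y + 1 - round x) with h | h
  · have hcast : ((round y + 1 - round x).toNat : ℝ) = ((round y + 1 - round x : ℤ) : ℝ) := by
      exact_mod_cast Int.toNat_of_nonneg h
    rw [hcast]
    push_cast
    linarith [abs_le.mp (abs_sub_round x), abs_le.mp (abs_sub_round y), le_abs_self (y - x)]
  · rw [Int.toNat_of_nonpos h]
    simpa using by positivity

theorem Finset.eq_Icc_min'_max' {α : Type*} [LinearOrder α] [LocallyFiniteOrder α] {s : Finset α}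
    (hs : (s : Set α).OrdConnected) (hne : s.Nonempty) :
    s = Finset.Icc (s.min' hne) (s.max' hne) := by
  ext x
  rw [Finset.mem_Icc]
  exact ⟨fun hx ↦ ⟨s.min'_le x hx, s.le_max' x hx⟩,
    fun hx ↦ hs.out (s.min'_mem hne) (s.max'_mem hne) hx⟩

theorem Finset.ordConnected_filter_comp {α β : Type*} [Preorder α] [Preorder β] {s : Finset α}
    (hs : (s : Set α).OrdConnected) {u : α → β} (hu : MonotoneOn u s) {p : β → Prop}
    [DecidablePred p] (hp : {x | p x}.OrdConnected) :
    ((s.filter fun n ↦ p (u n) : Finset α) : Set α).OrdConnected := by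
  rw [coe_filter]
  refine ⟨fun a ha b hb x hx ↦ ?_⟩
  have hxs : x ∈ (s : Set α) := hs.out ha.1 hb.1 hx
  exact ⟨hxs, hp.out ha.2 hb.2 ⟨hu ha.1 hxs hx.1, hu hxs hb.1 hx.2⟩⟩

theorem norm_sum_range_smul_sub_le {E : Type*} [NormedAddCommGroup E] [NormedSpace ℝ E]
    {A : ℕ → E} {g : ℕ → ℝ} {N : ℕ} {G : ℝ} (hA : ∀ i, ‖A i‖ ≤ 1)
    (hg : ∀ i, i + 1 < N → g (i + 1) ≤ g i) (hG : ∀ i < N, |g i| ≤ G) (hG₀ : 0 ≤ G) :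
    ‖∑ i ∈ range N, g i • (A i - A (i + 1))‖ ≤ 4 * G := by
  obtain _ | N := N
  · simpa using hG₀
  have hpartial : ∀ M ≤ N,
      ‖∑ i ∈ range (M + 1), g i • (A i - A (i + 1)) + g M • A (M + 1)‖ ≤ |g 0| + (g 0 - g M) := by
    intro M hM
    induction M with
    | zero =>
      simpa [smul_sub] using (norm_smul_le (g 0) (A 0)).trans
        (mul_le_of_le_one_right (abs_nonneg _) (hA 0))
    | succ M ih =>
      have hstep : ‖(g (M + 1) - g M) • A (M + 1)‖ ≤ g M - g (M + 1) := by
        rw [norm_smul, Real.norm_eq_abs, abs_of_nonpos (by linarith [hg M (by omega)])]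
        nlinarith [hA (M + 1), hg M (by omega)]
      calc _ = ‖(∑ i ∈ range (M + 1), g i • (A i - A (i + 1)) + g M • A (M + 1))
              + (g (M + 1) - g M) • A (M + 1)‖ := by
            rw [sum_range_succ]; congr 1; module
        _ ≤ _ := (norm_add_le _ _).trans (by linarith [ih (by omega)])
  have hlast : ‖g N • A (N + 1)‖ ≤ |g N| := by
    rw [norm_smul, Real.norm_eq_abs]
    exact mul_le_of_le_one_right (abs_nonneg _) (hA _)
  calc _ = ‖(∑ i ∈ range (N + 1), g i • (A i - A (i + 1)) + g N • A (N + 1))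
          - g N • A (N + 1)‖ := by rw [add_sub_cancel_right]
    _ ≤ |g 0| + (g 0 - g N) + |g N| :=
      (norm_sub_le _ _).trans (add_le_add (hpartial N le_rfl) hlast)
    _ ≤ 4 * G := by
      linarith [hG 0 (by omega), hG N (by omega), abs_le.mp (hG 0 (by omega)),
        abs_le.mp (hG N (by omega))]

section Calculus

variable {a b : ℝ}

theorem monotoneOn_Icc_of_hasDerivWithinAt_nonneg {g g' : ℝ → ℝ}
    (hg : ∀ x ∈ Set.Icc a b, HasDerivWithinAt g (g' x) (Set.Icc a b) x)
    (hg' : ∀ x ∈ Set.Icc a b, 0 ≤ g' x) :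
    MonotoneOn g (Set.Icc a b) :=
  monotoneOn_of_hasDerivWithinAt_nonneg (convex_Icc a b)
    (fun x hx ↦ (hg x hx).continuousWithinAt)
    (fun x hx ↦ (hg x (interior_subset hx)).mono interior_subset)
    (fun x hx ↦ hg' x (interior_subset hx))

theorem mul_sub_le_sub_of_le_hasDerivWithinAt {f' f'' : ℝ → ℝ} {ρ : ℝ}
    (hf'' : ∀ x ∈ Set.Icc a b, HasDerivWithinAt f' (f'' x) (Set.Icc a b) x)
    (hρ : ∀ x ∈ Set.Icc a b, ρ ≤ f'' x) {x y : ℝ} (hx : x ∈ Set.Icc a b) (hy : y ∈ Set.Icc a b)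
    (hxy : x ≤ y) : ρ * (y - x) ≤ f' y - f' x := by
  have := monotoneOn_Icc_of_hasDerivWithinAt_nonneg (g := fun z ↦ f' z - ρ * z)
    (fun z hz ↦ (hf'' z hz).sub ((hasDerivWithinAt_id z _).const_mul ρ))
    (fun z hz ↦ by linarith [hρ z hz]) hx hy hxy
  linarith

theorem sub_mem_Icc_of_hasDerivWithinAt {f f' : ℝ → ℝ}
    (hf' : ∀ x ∈ Set.Icc a b, HasDerivWithinAt f (f' x) (Set.Icc a b) x)
    (hmono : MonotoneOn f' (Set.Icc a b))
    {x y : ℝ} (hx : x ∈ Set.Icc a b) (hy : y ∈ Set.Icc a b) (hxy : x ≤ y) :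
    f y - f x ∈ Set.Icc (f' x * (y - x)) (f' y * (y - x)) := by
  have hxb : Set.Icc x b ⊆ Set.Icc a b := Set.Icc_subset_Icc_left hx.1
  have hay : Set.Icc a y ⊆ Set.Icc a b := Set.Icc_subset_Icc_right hy.2
  have lower := monotoneOn_Icc_of_hasDerivWithinAt_nonneg (g := fun z ↦ f z - f' x * z)
    (fun z hz ↦ ((hf' z (hxb hz)).mono hxb).sub ((hasDerivWithinAt_id z _).const_mul (f' x)))
    (fun z hz ↦ by linarith [hmono hx (hxb hz) hz.1])
    (Set.left_mem_Icc.2 (hxy.trans hy.2)) ⟨hxy, hy.2⟩ hxy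
  have upper := monotoneOn_Icc_of_hasDerivWithinAt_nonneg (g := fun z ↦ f' y * z - f z)
    (fun z hz ↦ ((hasDerivWithinAt_id z _).const_mul (f' y)).sub ((hf' z (hay hz)).mono hay))
    (fun z hz ↦ by linarith [hmono (hay hz) hy hz.2])
    ⟨hx.1, hxy⟩ (Set.right_mem_Icc.2 (hx.1.trans hxy)) hxy
  constructor <;> simp only at lower upper <;> linarith

end Calculus

namespace VanDerCorput

noncomputable def e (x : ℝ) : ℂ := Complex.exp (2 * π * I * x)

theorem e_eq_exp_ofReal_mul_I (x : ℝ) : e x = Complex.exp ((2 * π * x : ℝ) * I) := by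
  rw [e]; push_cast; ring_nf

theorem norm_e (x : ℝ) : ‖e x‖ = 1 := by
  rw [e_eq_exp_ofReal_mul_I, Complex.norm_exp_ofReal_mul_I]

theorem e_add (x y : ℝ) : e (x + y) = e x * e y := by
  rw [e, e, e, ← Complex.exp_add]; push_cast; ring_nf

theorem e_intCast (n : ℤ) : e n = 1 := by
  rw [e, ← Complex.exp_int_mul_two_pi_mul_I n]; push_cast; ring_nf

theorem e_neg (x : ℝ) : e (-x) = starRingEnd ℂ (e x) := by
  rw [e, e, ← Complex.exp_conj]; simp [map_ofNat]

theorem norm_sum_e_neg {ι : Type*} (s : Finset ι) (F : ι → ℝ) :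
    ‖∑ n ∈ s, e (-F n)‖ = ‖∑ n ∈ s, e (F n)‖ := by
  simp_rw [e_neg, ← map_sum, Complex.norm_conj]

theorem one_sub_e_mul_eq_one {t : ℝ} (ht : sin (π * t) ≠ 0) :
    (1 - e t) * (1 / 2 + (cot (π * t) / 2 : ℝ) * I) = 1 := by
  rw [e_eq_exp_ofReal_mul_I, Complex.exp_mul_I, show 2 * π * t = 2 * (π * t) by ring,
    cot_eq_cos_div_sin]
  push_cast
  rw [Complex.cos_two_mul, Complex.sin_two_mul]
  have hs : Complex.sin (π * t) ≠ 0 := by exact_mod_cast ht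
  field_simp
  linear_combination (-2 * Complex.cos (π * t) * I) * Complex.sin_sq_add_cos_sq (π * t) -
    2 * Complex.sin (π * t) * Complex.cos (π * t) ^ 2 * Complex.I_sq

theorem sum_range_e_eq {F : ℕ → ℝ} {N : ℕ} {c : ℤ}
    (hsin : ∀ i < N, sin (π * (F (i + 1) - F i - c)) ≠ 0) :
    ∑ i ∈ range (N + 1), e (F i) = (e (F 0) + e (F N)) / 2 +
      I * ∑ i ∈ range N, (cot (π * (F (i + 1) - F i - c)) / 2) • (e (F i) - e (F (i + 1))) := by
  have hrec : ∀ i < N, e (F i) = (1 / 2 + (cot (π * (F (i + 1) - F i - c)) / 2 : ℝ) * I) *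
      (e (F i) - e (F (i + 1))) := by
    intro i hi
    have hid := one_sub_e_mul_eq_one (hsin i hi)
    set t := F (i + 1) - F i - c
    rw [show F (i + 1) = F i + t + c by simp only [t]; ring, e_add, e_add, e_intCast]
    linear_combination (-e (F i)) * hid
  rw [sum_range_succ, sum_congr rfl fun i hi ↦ hrec i (mem_range.mp hi), mul_sum,
    show (e (F 0) + e (F N)) / 2 = 1 / 2 * (e (F 0) - e (F N)) + e (F N) by ring,
    ← sum_range_sub' (fun i ↦ e (F i)) N, mul_sum, add_right_comm, ← sum_add_distrib]
  congr 1
  refine sum_congr rfl fun i _ ↦ ?_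
  rw [Complex.real_smul]
  ring

theorem kusmin_landau {F : ℕ → ℝ} {N : ℕ} {c : ℤ} {δ : ℝ} (hδ : 0 < δ)
    (hwin : ∀ i < N, F (i + 1) - F i - c ∈ Set.Icc δ (1 - δ))
    (hmono : ∀ i, i + 1 < N → F (i + 1) - F i ≤ F (i + 2) - F (i + 1)) :
    ‖∑ i ∈ range (N + 1), e (F i)‖ ≤ 1 + 1 / δ := by
  set t : ℕ → ℝ := fun i ↦ F (i + 1) - F i - c
  set g : ℕ → ℝ := fun i ↦ cot (π * t i) / 2
  have hsin : ∀ i < N, 2 * δ ≤ sin (π * t i) := fun i hi ↦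
    Real.two_mul_le_sin_pi_mul hδ.le (hwin i hi)
  have hg : ∀ i, i + 1 < N → g (i + 1) ≤ g i := by
    intro i hi
    have h₁ := hwin i (by omega)
    have h₂ := hwin (i + 1) (by omega)
    have := hmono i hi
    refine div_le_div_of_nonneg_right (Real.cot_le_cot ?_ ?_ ?_) zero_le_two
    · exact mul_pos pi_pos (hδ.trans_le h₁.1)
    · exact mul_le_mul_of_nonneg_left (by simp only [t]; linarith) pi_pos.le
    · nlinarith [pi_pos, h₂.2]
  have hG : ∀ i < N, |g i| ≤ 1 / (4 * δ) := by
    intro i hi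
    have hs := hsin i hi
    rw [abs_div, abs_two, div_le_iff₀ two_pos]
    calc |cot (π * t i)| ≤ 1 / sin (π * t i) := Real.abs_cot_le (by linarith)
      _ ≤ 1 / (2 * δ) := one_div_le_one_div_of_le (by positivity) hs
      _ = 1 / (4 * δ) * 2 := by field_simp; ring
  have habel := norm_sum_range_smul_sub_le (fun i ↦ (norm_e (F i)).le) hg hG (by positivity)
  have hends : ‖(e (F 0) + e (F N)) / 2‖ ≤ 1 := by
    rw [norm_div, Complex.norm_two, div_le_one two_pos]
    exact (norm_add_le _ _).trans (by rw [norm_e, norm_e]; norm_num)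
  calc _ ≤ ‖(e (F 0) + e (F N)) / 2‖ + ‖I * ∑ i ∈ range N, g i • (e (F i) - e (F (i + 1)))‖ := by
        rw [sum_range_e_eq fun i hi ↦ (by linarith [hsin i hi])]; exact norm_add_le _ _
    _ ≤ 1 + 4 * (1 / (4 * δ)) := by rw [norm_mul, Complex.norm_I, one_mul]; gcongr
    _ = 1 + 1 / δ := by field_simp

section Block

variable {s : Finset ℤ} {F u : ℤ → ℝ} {ρ : ℝ}

theorem kusmin_landau_of_ordConnected (hs : (s : Set ℤ).OrdConnected) {c : ℤ} {δ : ℝ}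
    (hδ : 0 < δ) (hwin : ∀ n ∈ s, n + 1 ∈ s → F (n + 1) - F n - c ∈ Set.Icc δ (1 - δ))
    (hmono : ∀ n ∈ s, n + 2 ∈ s → F (n + 1) - F n ≤ F (n + 2) - F (n + 1)) :
    ‖∑ n ∈ s, e (F n)‖ ≤ 1 + 1 / δ := by
  rcases s.eq_empty_or_nonempty with rfl | hne
  · simpa using by positivity
  set a := s.min' hne
  set b := s.max' hne
  have hab : a ≤ b := s.min'_le_max' hne
  have hmem : ∀ i : ℕ, i ≤ (b - a).toNat → a + i ∈ s := by
    intro i hi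
    rw [s.eq_Icc_min'_max' hs hne, Finset.mem_Icc]
    omega
  rw [s.eq_Icc_min'_max' hs hne, Int.Icc_eq_finset_map, sum_map,
    show (b + 1 - a).toNat = (b - a).toNat + 1 by omega]
  simp only [Function.Embedding.trans_apply, Nat.castEmbedding_apply, addLeftEmbedding_apply]
  refine kusmin_landau (F := fun i ↦ F (a + i)) (c := c) hδ (fun i hi ↦ ?_) (fun i hi ↦ ?_)
  · simpa [add_assoc] using
      hwin (a + i) (hmem i hi.le) (by simpa [add_assoc] using hmem (i + 1) hi)
  · simpa [add_assoc] using
      hmono (a + i) (hmem i (by omega)) (by simpa [add_assoc] using hmem (i + 2) (by omega))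

theorem kusmin_landau_of_deriv_mem_Icc (hs : (s : Set ℤ).OrdConnected)
    (hdiff : ∀ n ∈ s, n + 1 ∈ s → F (n + 1) - F n ∈ Set.Icc (u n) (u (n + 1)))
    {c : ℤ} {δ : ℝ} (hδ : 0 < δ) (hu : ∀ n ∈ s, u n ∈ Set.Icc (c + δ) (c + 1 - δ)) :
    ‖∑ n ∈ s, e (F n)‖ ≤ 1 + 1 / δ := by
  refine kusmin_landau_of_ordConnected (c := c) hs hδ (fun n hn hn₁ ↦ ?_) (fun n hn hn₂ ↦ ?_)
  · have h := hdiff n hn hn₁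
    have h₀ := hu n hn
    have h₁ := hu (n + 1) hn₁
    constructor <;> linarith [h.1, h.2, h₀.1, h₁.2]
  · have hn₁ : n + 1 ∈ s := hs.out hn hn₂ ⟨by omega, by omega⟩
    have h₁ := hdiff n hn hn₁
    have h₂ := hdiff (n + 1) hn₁ (by rwa [add_assoc])
    rw [add_assoc] at h₂
    exact h₁.2.trans h₂.1

theorem monotoneOn_of_growth (hρ : 0 ≤ ρ)
    (hgrowth : ∀ a ∈ s, ∀ b ∈ s, a ≤ b → ρ * (b - a) ≤ u b - u a) : MonotoneOn u s :=
  fun a ha b hb hab ↦ by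
    have : (0 : ℝ) ≤ b - a := by rw [sub_nonneg]; exact_mod_cast hab
    nlinarith [hgrowth a ha b hb hab]

theorem card_le_of_growth (hρ : 0 < ρ)
    (hgrowth : ∀ a ∈ s, ∀ b ∈ s, a ≤ b → ρ * (b - a) ≤ u b - u a) {x D : ℝ} (hD : 0 ≤ D)
    (hu : ∀ n ∈ s, u n ∈ Set.Icc x (x + D)) : (#s : ℝ) ≤ D / ρ + 1 := by
  rcases s.eq_empty_or_nonempty with rfl | hne
  · simpa using by positivity
  set a := s.min' hne
  set b := s.max' hne
  have hcard : (#s : ℤ) ≤ b + 1 - a := by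
    have := Finset.card_le_card (t := Finset.Icc a b) fun n hn ↦
      Finset.mem_Icc.2 ⟨s.min'_le n hn, s.le_max' n hn⟩
    rw [Int.card_Icc] at this
    have := s.min'_le_max' hne
    omega
  have hspread : ρ * (b - a) ≤ D := by
    have := hgrowth a (s.min'_mem hne) b (s.max'_mem hne) (s.min'_le_max' hne)
    linarith [(hu a (s.min'_mem hne)).1, (hu b (s.max'_mem hne)).2]
  have : (b - a : ℝ) ≤ D / ρ := by rw [le_div_iff₀ hρ]; linarith
  have : (#s : ℝ) ≤ b + 1 - a := by exact_mod_cast hcard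
  linarith

theorem norm_sum_e_le_of_growth (hρ : 0 < ρ)
    (hgrowth : ∀ a ∈ s, ∀ b ∈ s, a ≤ b → ρ * (b - a) ≤ u b - u a) {x D : ℝ} (hD : 0 ≤ D)
    (hu : ∀ n ∈ s, u n ∈ Set.Icc x (x + D)) : ‖∑ n ∈ s, e (F n)‖ ≤ D / ρ + 1 :=
  ((norm_sum_le _ _).trans (by simp [norm_e])).trans (card_le_of_growth hρ hgrowth hD hu)

theorem norm_sum_e_le_of_deriv_near_int (hρ : 0 < ρ) (hs : (s : Set ℤ).OrdConnected)
    (hdiff : ∀ n ∈ s, n + 1 ∈ s → F (n + 1) - F n ∈ Set.Icc (u n) (u (n + 1)))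
    (hgrowth : ∀ a ∈ s, ∀ b ∈ s, a ≤ b → ρ * (b - a) ≤ u b - u a) {m : ℤ}
    (hm : ∀ n ∈ s, u n ∈ Set.Icc (m - 1 / 2 : ℝ) (m + 1 / 2)) {δ : ℝ} (hδ : 0 < δ) :
    ‖∑ n ∈ s, e (F n)‖ ≤ 2 * (1 + 1 / δ) + (2 * δ / ρ + 1) := by
  have hmono := monotoneOn_of_growth hρ.le hgrowth
  have hdiff_mono : ∀ t ⊆ s, ∀ n ∈ t, n + 1 ∈ t → F (n + 1) - F n ∈ Set.Icc (u n) (u (n + 1)) :=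
    fun t ht n hn hn₁ ↦ hdiff n (ht hn) (ht hn₁)
  rw [← sum_filter_add_sum_filter_not s (fun n ↦ u n < m - δ),
    ← sum_filter_add_sum_filter_not (s.filter fun n ↦ ¬ u n < m - δ) (fun n ↦ u n ≤ m + δ)]
  set s' := s.filter fun n ↦ ¬ u n < m - δ
  have hs' : (s' : Set ℤ).OrdConnected :=
    Finset.ordConnected_filter_comp hs hmono (p := fun x ↦ ¬ x < m - δ)
      (by simp only [not_lt]; exact ordConnected_Ici)
  have hs's : s' ⊆ s := filter_subset _ _
  have hleft : ‖∑ n ∈ s.filter fun n ↦ u n < m - δ, e (F n)‖ ≤ 1 + 1 / δ := by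
    refine kusmin_landau_of_deriv_mem_Icc (c := m - 1)
      (Finset.ordConnected_filter_comp hs hmono (p := fun x ↦ x < m - δ) ordConnected_Iio)
      (hdiff_mono _ (filter_subset _ _)) hδ fun n hn ↦ ?_
    rw [mem_filter] at hn
    have := hm n hn.1
    push_cast
    constructor <;> linarith [this.1, hn.2]
  have hmiddle : ‖∑ n ∈ s'.filter fun n ↦ u n ≤ m + δ, e (F n)‖ ≤ 2 * δ / ρ + 1 := by
    refine norm_sum_e_le_of_growth hρ
      (fun a ha b hb ↦ hgrowth a (hs's (filter_subset _ _ ha)) b (hs's (filter_subset _ _ hb)))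
      (by positivity) (x := m - δ) fun n hn ↦ ?_
    rw [mem_filter, mem_filter] at hn
    constructor <;> linarith [not_lt.1 hn.1.2, hn.2]
  have hright : ‖∑ n ∈ s'.filter fun n ↦ ¬ u n ≤ m + δ, e (F n)‖ ≤ 1 + 1 / δ := by
    refine kusmin_landau_of_deriv_mem_Icc (c := m)
      (Finset.ordConnected_filter_comp hs' (hmono.mono hs's) (p := fun x ↦ ¬ x ≤ m + δ)
        (by simp only [not_le]; exact ordConnected_Ioi))
      (hdiff_mono _ ((filter_subset _ _).trans hs's)) hδ fun n hn ↦ ?_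
    rw [mem_filter] at hn
    have := hm n (hs's hn.1)
    constructor <;> linarith [this.2, not_le.1 hn.2]
  calc _ ≤ (1 + 1 / δ) + ((2 * δ / ρ + 1) + (1 + 1 / δ)) := (norm_add_le _ _).trans
        (add_le_add hleft ((norm_add_le _ _).trans (add_le_add hmiddle hright)))
    _ = _ := by ring

end Block

theorem norm_sum_e_Icc_le {k l : ℤ} {F u : ℤ → ℝ} {ρ : ℝ} (hρ : 0 < ρ)
    (hdiff : ∀ n ∈ Finset.Icc k l, n + 1 ∈ Finset.Icc k l →
      F (n + 1) - F n ∈ Set.Icc (u n) (u (n + 1)))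
    (hgrowth : ∀ a ∈ Finset.Icc k l, ∀ b ∈ Finset.Icc k l, a ≤ b → ρ * (b - a) ≤ u b - u a) :
    ‖∑ n ∈ Finset.Icc k l, e (F n)‖ ≤ (|u l - u k| + 2) * (4 / √ρ + 3) := by
  have hs : ((Finset.Icc k l : Finset ℤ) : Set ℤ).OrdConnected := by
    rw [Finset.coe_Icc]; exact ordConnected_Icc
  have hmono := monotoneOn_of_growth hρ.le hgrowth
  have hmaps : ∀ n ∈ Finset.Icc k l, round (u n) ∈ Finset.Icc (round (u k)) (round (u l)) := by
    intro n hn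
    obtain ⟨hkn, hnl⟩ := Finset.mem_Icc.1 hn
    exact Finset.mem_Icc.2
      ⟨round_monotone (hmono (Finset.left_mem_Icc.2 (hkn.trans hnl)) hn hkn),
        round_monotone (hmono hn (Finset.right_mem_Icc.2 (hkn.trans hnl)) hnl)⟩
  rw [← sum_fiberwise_of_maps_to hmaps]
  calc _ ≤ ∑ m ∈ Finset.Icc (round (u k)) (round (u l)),
        ‖∑ n ∈ (Finset.Icc k l).filter fun n ↦ round (u n) = m, e (F n)‖ := norm_sum_le _ _
    _ ≤ ∑ m ∈ Finset.Icc (round (u k)) (round (u l)), (4 / √ρ + 3) := by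
      refine sum_le_sum fun m _ ↦ ?_
      have hsub : (Finset.Icc k l).filter (fun n ↦ round (u n) = m) ⊆ Finset.Icc k l :=
        filter_subset _ _
      have hm : ∀ n ∈ (Finset.Icc k l).filter (fun n ↦ round (u n) = m),
          u n ∈ Set.Icc (m - 1 / 2 : ℝ) (m + 1 / 2) := fun n hn ↦
        Set.Ico_subset_Icc_self (round_eq_iff.1 (mem_filter.1 hn).2)
      set δ := √ρ
      have hρδ : ρ = δ ^ 2 := (sq_sqrt hρ.le).symm
      calc _ ≤ 2 * (1 + 1 / δ) + (2 * δ / ρ + 1) :=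
            norm_sum_e_le_of_deriv_near_int hρ
              (Finset.ordConnected_filter_comp hs hmono (p := fun x ↦ round x = m)
                (ordConnected_singleton.preimage_mono round_monotone))
              (fun n hn hn₁ ↦ hdiff n (hsub hn) (hsub hn₁))
              (fun a ha b hb ↦ hgrowth a (hsub ha) b (hsub hb)) hm (sqrt_pos.2 hρ)
        _ = 4 / δ + 3 := by rw [hρδ]; field_simp; ring
    _ ≤ (|u l - u k| + 2) * (4 / √ρ + 3) := by
      rw [sum_const, nsmul_eq_mul]
      exact mul_le_mul_of_nonneg_right (card_Icc_round_le _ _) (by positivity)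

theorem norm_sum_e_Icc_le_of_le_second_deriv (k l : ℤ) {ρ : ℝ} (hρ : 0 < ρ) {f f' f'' : ℝ → ℝ}
    (hf' : ∀ x ∈ Set.Icc (k : ℝ) l, HasDerivWithinAt f (f' x) (Set.Icc (k : ℝ) l) x)
    (hf'' : ∀ x ∈ Set.Icc (k : ℝ) l, HasDerivWithinAt f' (f'' x) (Set.Icc (k : ℝ) l) x)
    (hρf'' : ∀ x ∈ Set.Icc (k : ℝ) l, ρ ≤ f'' x) :
    ‖∑ n ∈ Finset.Icc k l, e (f n)‖ ≤ (|f' l - f' k| + 2) * (4 / √ρ + 3) := by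
  have hcast : ∀ n ∈ Finset.Icc k l, (n : ℝ) ∈ Set.Icc (k : ℝ) l := fun n hn ↦ by
    obtain ⟨h₁, h₂⟩ := Finset.mem_Icc.1 hn
    exact ⟨by exact_mod_cast h₁, by exact_mod_cast h₂⟩
  have hgrowth : ∀ x ∈ Set.Icc (k : ℝ) l, ∀ y ∈ Set.Icc (k : ℝ) l, x ≤ y →
      ρ * (y - x) ≤ f' y - f' x :=
    fun x hx y hy ↦ mul_sub_le_sub_of_le_hasDerivWithinAt hf'' hρf'' hx hy
  have hmono : MonotoneOn f' (Set.Icc (k : ℝ) l) := fun x hx y hy hxy ↦ by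
    nlinarith [hgrowth x hx y hy hxy]
  refine norm_sum_e_Icc_le (F := fun n ↦ f n) (u := fun n ↦ f' n) hρ (fun n hn hn₁ ↦ ?_)
    (fun a ha b hb hab ↦ hgrowth a (hcast a ha) b (hcast b hb) (by exact_mod_cast hab))
  have := sub_mem_Icc_of_hasDerivWithinAt hf' hmono (hcast n hn) (hcast _ hn₁) (by simp)
  push_cast at this ⊢
  simpa using this

end VanDerCorput

theorem stmt_10_general (k l : ℤ) (ρ : ℝ) (hρ : 0 < ρ)
    (f f' f'' : ℝ → ℝ)
    (hf' : ∀ x ∈ Set.Icc (k : ℝ) (l : ℝ), HasDerivWithinAt f (f' x) (Set.Icc (k : ℝ) (l : ℝ)) x)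
    (hf'' : ∀ x ∈ Set.Icc (k : ℝ) (l : ℝ), HasDerivWithinAt f' (f'' x) (Set.Icc (k : ℝ) (l : ℝ)) x)
    (hρbound : (∀ x ∈ Set.Icc (k : ℝ) (l : ℝ), ρ ≤ f'' x) ∨
               (∀ x ∈ Set.Icc (k : ℝ) (l : ℝ), f'' x ≤ -ρ)) :
    ‖∑ n ∈ Finset.Icc k l, Complex.exp (2 * Real.pi * Complex.I * (f n))‖ ≤
      (|f' l - f' k| + 2) * (4 / Real.sqrt ρ + 3) := by
  change ‖∑ n ∈ Finset.Icc k l, VanDerCorput.e (f n)‖ ≤ _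
  rcases hρbound with hge | hle
  · exact VanDerCorput.norm_sum_e_Icc_le_of_le_second_deriv k l hρ hf' hf'' hge
  · have := VanDerCorput.norm_sum_e_Icc_le_of_le_second_deriv k l hρ (fun x hx ↦ (hf' x hx).neg)
      (fun x hx ↦ (hf'' x hx).neg) (fun x hx ↦ le_neg.1 (hle x hx))
    simp only [Pi.neg_apply] at this
    rwa [VanDerCorput.norm_sum_e_neg, neg_sub_neg, abs_sub_comm] at this

/-- Van der Corput's estimate on oscillatory exponential sums (Lemma 5.5 of the paper). -/
theorem stmt_10 (k l : ℤ) (hkl : k < l) (ρ : ℝ) (hρ : 0 < ρ)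
    (f f' f'' : ℝ → ℝ)
    (hf' : ∀ x ∈ Set.Icc (k : ℝ) (l : ℝ), HasDerivWithinAt f (f' x) (Set.Icc (k : ℝ) (l : ℝ)) x)
    (hf'' : ∀ x ∈ Set.Icc (k : ℝ) (l : ℝ), HasDerivWithinAt f' (f'' x) (Set.Icc (k : ℝ) (l : ℝ)) x)
    (hρbound : (∀ x ∈ Set.Icc (k : ℝ) (l : ℝ), ρ ≤ f'' x) ∨
               (∀ x ∈ Set.Icc (k : ℝ) (l : ℝ), f'' x ≤ -ρ)) :
    ‖∑ n ∈ Finset.Icc k l, Complex.exp (2 * Real.pi * Complex.I * (f n))‖ ≤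
      (|f' l - f' k| + 2) * (4 / Real.sqrt ρ + 3) :=
  stmt_10_general k l ρ hρ f f' f'' hf' hf'' hρbound
end

section
/- Let B be a finite set of irrational real numbers, let K be a finite set of positive integers, and let (e_m)_{m∈ℕ} be a sequence of positive real numbers with e_m → 0. Then the set S = {m ∈ ℕ : ‖m^k·α‖ ≤ e_m for some α ∈ B and some k ∈ K} has density 0, i.e., |S ∩ {1,…,N}|/N → 0 as N → ∞. -/
open Filter

/-- The distance of a real number to the nearest integer. -/
noncomputable def distToInt (x : ℝ) : ℝ := |x - round x|

/-!
Weyl differencing with a density count instead of equidistribution. Say that `f : ℕ → ℝ` is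
rarely near integers if for every `δ > 0` and all small `ε > 0`, at most `δ N` of the
`m ∈ [1, N]` satisfy `‖f m‖ ≤ ε`. If every difference `m ↦ f (m + d) - f m` with `d ≥ 1` has
this property, so does `f`: among the `m ≤ N` with `‖f m‖ ≤ ε`, those followed within distance
`H` by another one satisfy `‖f (m + d) - f m‖ ≤ 2ε` for some `d ≤ H`, and the others are
`H`-separated, so there are at most `N / H + 1` of them. Differencing a polynomial with
irrational leading coefficient lowers its degree by one and keeps the leading coefficient
irrational, so by induction on the degree `m ↦ α m ^ k` is rarely near integers. As `e m → 0`,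
the `m` with `‖α m ^ k‖ ≤ e m` then have density zero, and `S` is a finite union of such sets.
-/

open Finset Polynomial Topology fwdDiff

lemma Irrational.distToInt_pos {x : ℝ} (hx : Irrational x) : 0 < distToInt x := by
  rw [distToInt, abs_pos, sub_ne_zero]
  exact fun h => hx ⟨round x, h.symm⟩

lemma distToInt_sub_le (x y : ℝ) : distToInt (x - y) ≤ distToInt x + distToInt y := by
  calc distToInt (x - y) ≤ |x - y - ((round x - round y : ℤ) : ℝ)| := round_le _ _
    _ = |(x - round x) - (y - round y)| := by push_cast; ring_nf
    _ ≤ distToInt x + distToInt y := abs_sub _ _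

namespace Polynomial

variable {R : Type*} [CommRing R] {p : R[X]} {n : ℕ}

lemma natDegree_taylor_sub_self_le (hp : p.natDegree ≤ n + 1) (r : R) :
    (taylor r p - p).natDegree ≤ n := by
  refine natDegree_le_iff_coeff_eq_zero.2 fun k hk => ?_
  have hconst : (hasseDeriv k p).natDegree = 0 :=
    Nat.le_zero.1 ((natDegree_hasseDeriv_le p k).trans (by omega))
  rw [coeff_sub, taylor_coeff, eq_C_of_natDegree_eq_zero hconst, eval_C, hasseDeriv_coeff]
  simp

lemma coeff_taylor_sub_self (hp : p.natDegree ≤ n + 1) (r : R) :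
    (taylor r p - p).coeff n = (n + 1) * r * p.coeff (n + 1) := by
  have hlin : (hasseDeriv n p).natDegree < 2 := (natDegree_hasseDeriv_le p n).trans_lt (by omega)
  rw [coeff_sub, taylor_coeff, eval_eq_sum_range' hlin]
  simp only [hasseDeriv_coeff, Finset.sum_range_succ, Finset.range_one, Finset.sum_singleton,
    zero_add, Nat.choose_self, Nat.cast_one, one_mul, pow_zero, mul_one, add_comm 1 n,
    Nat.choose_succ_self_right, Nat.cast_add, pow_one, add_sub_cancel_left]
  ring

end Polynomial

lemma card_le_div_add_one_of_separated {S : Finset ℕ} {H N : ℕ} (hH : 0 < H)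
    (hS : ∀ m ∈ S, m ≤ N) (hsep : ∀ a ∈ S, ∀ b ∈ S, a < b → a + H ≤ b) :
    #S ≤ N / H + 1 := by
  have hmono : StrictMonoOn (· / H) (S : Set ℕ) := fun a ha b hb hab =>
    calc a / H < a / H + 1 := Nat.lt_succ_self _
      _ = (a + H) / H := (Nat.add_div_right a hH).symm
      _ ≤ b / H := Nat.div_le_div_right (hsep a ha b hb hab)
  simpa using card_le_card_of_injOn (t := range (N / H + 1)) (· / H)
    (fun m hm => mem_range.2 (Nat.lt_succ_of_le (Nat.div_le_div_right (hS m hm)))) hmono.injOn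

lemma card_le_div_add_one_add_card_filter (A : Finset ℕ) {H N : ℕ} (hH : 0 < H)
    (hA : ∀ m ∈ A, m ≤ N) :
    #A ≤ N / H + 1 + #{a ∈ A | ∃ b ∈ A, a < b ∧ b < a + H} := by
  rw [← card_filter_add_card_filter_not (p := fun a => ∃ b ∈ A, a < b ∧ b < a + H), add_comm]
  refine Nat.add_le_add_right (card_le_div_add_one_of_separated hH
    (fun m hm => hA m (mem_filter.1 hm).1) fun a ha b hb hab => ?_) _
  have := (mem_filter.1 ha).2
  push Not at this
  exact this b (mem_filter.1 hb).1 hab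

def RarelyNearInt (f : ℕ → ℝ) : Prop :=
  ∀ δ > 0, ∀ᶠ ε in 𝓝[>] (0 : ℝ), ∀ᶠ N in atTop,
    (#{m ∈ Icc 1 N | distToInt (f m) ≤ ε} : ℝ) ≤ δ * N

lemma rarelyNearInt_const {α : ℝ} (hα : Irrational α) : RarelyNearInt fun _ => α := by
  intro δ hδ
  filter_upwards [Ioo_mem_nhdsGT hα.distToInt_pos] with ε hε
  refine Eventually.of_forall fun N => ?_
  rw [filter_false_of_mem fun m _ => not_le.2 hε.2, card_empty, Nat.cast_zero]
  positivity

lemma card_le_div_add_one_add_sum_card_fwdDiff (f : ℕ → ℝ) (ε : ℝ) {H : ℕ} (hH : 0 < H)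
    (N : ℕ) :
    #{m ∈ Icc 1 N | distToInt (f m) ≤ ε} ≤
      N / H + 1 + ∑ d ∈ Icc 1 H, #{m ∈ Icc 1 N | distToInt (Δ_[d] f m) ≤ 2 * ε} := by
  set A := {m ∈ Icc 1 N | distToInt (f m) ≤ ε}
  have hclose : {a ∈ A | ∃ b ∈ A, a < b ∧ b < a + H} ⊆
      (Icc 1 H).biUnion fun d => {m ∈ Icc 1 N | distToInt (Δ_[d] f m) ≤ 2 * ε} := by
    intro a ha
    obtain ⟨haA, b, hbA, hab, hba⟩ := mem_filter.1 ha
    obtain ⟨haN, hfa⟩ := mem_filter.1 haA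
    have hfb := (mem_filter.1 hbA).2
    refine mem_biUnion.2 ⟨b - a, mem_Icc.2 ⟨by omega, by omega⟩, mem_filter.2 ⟨haN, ?_⟩⟩
    rw [fwdDiff, Nat.add_sub_cancel' hab.le]
    linarith [distToInt_sub_le (f b) (f a)]
  refine (card_le_div_add_one_add_card_filter A hH fun m hm => ?_).trans
    (Nat.add_le_add_left ((card_le_card hclose).trans card_biUnion_le) _)
  exact (mem_Icc.1 (mem_filter.1 hm).1).2

theorem RarelyNearInt.of_fwdDiff {f : ℕ → ℝ} (h : ∀ d ≥ 1, RarelyNearInt (Δ_[d] f)) :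
    RarelyNearInt f := by
  intro δ hδ
  obtain ⟨H, hH⟩ := exists_nat_ge (4 / δ)
  have hH0 : (0 : ℝ) < H := (by positivity : (0 : ℝ) < 4 / δ).trans_le hH
  have hdiff : ∀ᶠ ε in 𝓝[>] (0 : ℝ), ∀ d ∈ Icc 1 H, ∀ᶠ N in atTop,
      (#{m ∈ Icc 1 N | distToInt (Δ_[d] f m) ≤ 2 * ε} : ℝ) ≤ δ / (4 * H) * N :=
    eventually_nhdsGT_zero_mul_left two_pos <| (eventually_all_finset _).2 fun d hd =>
      h d (mem_Icc.1 hd).1 _ (by positivity)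
  filter_upwards [hdiff] with ε hε
  filter_upwards [(eventually_all_finset _).2 hε, eventually_ge_atTop ⌈4 / δ⌉₊] with N hdN hN
  have hcount : (#{m ∈ Icc 1 N | distToInt (f m) ≤ ε} : ℝ) ≤
      N / H + 1 + ∑ d ∈ Icc 1 H, (#{m ∈ Icc 1 N | distToInt (Δ_[d] f m) ≤ 2 * ε} : ℝ) := by
    have := card_le_div_add_one_add_sum_card_fwdDiff f ε (Nat.cast_pos.1 hH0) N
    calc _ ≤ ((N / H + 1 + ∑ d ∈ Icc 1 H,
          #{m ∈ Icc 1 N | distToInt (Δ_[d] f m) ≤ 2 * ε} : ℕ) : ℝ) := by exact_mod_cast this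
      _ ≤ _ := by push_cast; gcongr; exact Nat.cast_div_le
  have hsum : ∑ d ∈ Icc 1 H, (#{m ∈ Icc 1 N | distToInt (Δ_[d] f m) ≤ 2 * ε} : ℝ) ≤
      δ / 4 * N :=
    calc _ ≤ ∑ d ∈ Icc 1 H, δ / (4 * H) * N := sum_le_sum hdN
      _ = δ / 4 * N := by
        rw [sum_const, Nat.card_Icc, Nat.add_sub_cancel, nsmul_eq_mul]
        field_simp
  have hN' : 4 / δ ≤ N := (Nat.le_ceil _).trans (by exact_mod_cast hN)
  rw [div_le_iff₀ hδ] at hH hN'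
  have hdiv : (N : ℝ) / H ≤ δ / 4 * N := by
    rw [div_le_iff₀ hH0]
    nlinarith
  linarith

theorem rarelyNearInt_eval {p : ℝ[X]} (hp : Irrational p.leadingCoeff) :
    RarelyNearInt fun m : ℕ => p.eval (m : ℝ) := by
  induction hn : p.natDegree generalizing p with
  | zero =>
    rw [eq_C_of_natDegree_eq_zero hn] at hp ⊢
    simpa using rarelyNearInt_const (by simpa using hp)
  | succ n ih =>
    refine RarelyNearInt.of_fwdDiff fun d hd => ?_
    set q := taylor (d : ℝ) p - p
    have hcoeff : q.coeff n = ((n + 1) * d : ℕ) * p.leadingCoeff := by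
      rw [coeff_taylor_sub_self hn.le, leadingCoeff, hn]
      push_cast
      ring
    have hirr : Irrational (q.coeff n) := hcoeff ▸ hp.natCast_mul (by positivity)
    have hq : q.natDegree = n :=
      natDegree_eq_of_le_of_coeff_ne_zero (natDegree_taylor_sub_self_le hn.le _) hirr.ne_zero
    have hdiff : Δ_[d] (fun m : ℕ => p.eval (m : ℝ)) = fun m : ℕ => q.eval (m : ℝ) :=
      funext fun m => by simp [q, fwdDiff, taylor_eval]
    rw [hdiff]
    exact ih (by rwa [leadingCoeff, hq]) hq

theorem rarelyNearInt_pow_mul {α : ℝ} (hα : Irrational α) (k : ℕ) :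
    RarelyNearInt fun m : ℕ => (m : ℝ) ^ k * α := by
  have h := rarelyNearInt_eval (p := C α * X ^ k) (by rwa [leadingCoeff_C_mul_X_pow])
  simp only [eval_mul, eval_C, eval_pow, eval_X] at h
  simpa only [mul_comm] using h

theorem RarelyNearInt.tendsto_card_div {f : ℕ → ℝ} (hf : RarelyNearInt f) {e : ℕ → ℝ}
    (he : Tendsto e atTop (𝓝 0)) :
    Tendsto (fun N : ℕ => (#{m ∈ Icc 1 N | distToInt (f m) ≤ e m} : ℝ) / N) atTop (𝓝 0) := by
  refine tendsto_order.2 ⟨fun a ha => Eventually.of_forall fun N => ha.trans_le (by positivity),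
    fun δ hδ => ?_⟩
  obtain ⟨ε, hsmall, hε⟩ := ((hf (δ / 2) (by positivity)).and self_mem_nhdsWithin).exists
  obtain ⟨M, hM⟩ := eventually_atTop.1 (he.eventually (gt_mem_nhds hε))
  filter_upwards [hsmall, tendsto_natCast_atTop_atTop.eventually_gt_atTop (2 * M / δ)]
    with N hN hNM
  have hsub : {m ∈ Icc 1 N | distToInt (f m) ≤ e m} ⊆
      Icc 1 M ∪ {m ∈ Icc 1 N | distToInt (f m) ≤ ε} := by
    intro m hm
    obtain ⟨hmN, hfm⟩ := mem_filter.1 hm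
    rcases lt_or_ge m M with h | h
    · exact mem_union_left _ (mem_Icc.2 ⟨(mem_Icc.1 hmN).1, h.le⟩)
    · exact mem_union_right _ (mem_filter.2 ⟨hmN, hfm.trans (hM m h).le⟩)
  have hcard : #{m ∈ Icc 1 N | distToInt (f m) ≤ e m} ≤ M + #{m ∈ Icc 1 N | distToInt (f m) ≤ ε} :=
    by simpa using (card_le_card hsub).trans (card_union_le _ _)
  replace hcard : (#{m ∈ Icc 1 N | distToInt (f m) ≤ e m} : ℝ) ≤ M + δ / 2 * N :=
    calc _ ≤ (M : ℝ) + #{m ∈ Icc 1 N | distToInt (f m) ≤ ε} := by exact_mod_cast hcard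
      _ ≤ M + δ / 2 * N := by gcongr
  have hNpos : (0 : ℝ) < N := (by positivity : (0 : ℝ) ≤ 2 * M / δ).trans_lt hNM
  rw [div_lt_iff₀ hδ] at hNM
  rw [div_lt_iff₀ hNpos]
  linarith

theorem stmt_11_general (B : Finset ℝ) (hB : ∀ α ∈ B, Irrational α)
    (K : Finset ℕ)
    (e : ℕ → ℝ) (he0 : Tendsto e atTop (nhds 0)) :
    Tendsto
      (fun N : ℕ =>
        (Nat.card ↥({m : ℕ | ∃ α ∈ B, ∃ k ∈ K, distToInt ((m : ℝ) ^ k * α) ≤ e m}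
            ∩ Set.Icc 1 N) : ℝ) / N)
      atTop (nhds 0) := by
  set S := {m : ℕ | ∃ α ∈ B, ∃ k ∈ K, distToInt ((m : ℝ) ^ k * α) ≤ e m}
  set T : ℝ × ℕ → ℕ → Finset ℕ := fun q N => {m ∈ Icc 1 N | distToInt ((m : ℝ) ^ q.2 * q.1) ≤ e m}
  have hcard (N : ℕ) : Nat.card ↥(S ∩ Set.Icc 1 N) ≤ ∑ q ∈ B ×ˢ K, #(T q N) := by
    have hsub : S ∩ Set.Icc 1 N ⊆ ↑((B ×ˢ K).biUnion fun q => T q N) := by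
      rintro m ⟨⟨α, hα, k, hk, hm⟩, hmN⟩
      simp only [coe_biUnion, coe_product, Set.mem_iUnion]
      exact ⟨(α, k), ⟨hα, hk⟩, by simpa [T] using ⟨hmN, hm⟩⟩
    rw [Nat.card_coe_set_eq]
    exact (Set.ncard_le_ncard hsub (finite_toSet _)).trans
      ((Set.ncard_coe_finset _).trans_le card_biUnion_le)
  have hT (q) (hq : q ∈ B ×ˢ K) : Tendsto (fun N : ℕ => (#(T q N) : ℝ) / N) atTop (𝓝 0) :=
    (rarelyNearInt_pow_mul (hB _ (mem_product.1 hq).1) q.2).tendsto_card_div he0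
  refine squeeze_zero (fun N => by positivity) (fun N => ?_) (by simpa using tendsto_finsetSum _ hT)
  rw [← sum_div]
  gcongr
  exact_mod_cast hcard N

/-- Lemma 4.4 of the paper. -/
theorem stmt_11 (B : Finset ℝ) (hB : ∀ α ∈ B, Irrational α)
    (K : Finset ℕ) (hK : ∀ k ∈ K, 1 ≤ k)
    (e : ℕ → ℝ) (he : ∀ m, 0 < e m) (he0 : Tendsto e atTop (nhds 0)) :
    Tendsto
      (fun N : ℕ =>
        (Nat.card ↥({m : ℕ | ∃ α ∈ B, ∃ k ∈ K, distToInt ((m : ℝ) ^ k * α) ≤ e m}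
            ∩ Set.Icc 1 N) : ℝ) / N)
      atTop (nhds 0) :=
  stmt_11_general B hB K e he0
end

section
/- Let a : ℕ → ℝ satisfy a(n) → +∞ and a(n+1) − a(n) → 0 as n → ∞. Then the range of the sequence ([a(n)])_{n∈ℕ} is a cofinite subset of ℕ: there exists N₀ such that every integer N ≥ N₀ equals [a(n)] for some n ∈ ℕ. -/
open Filter

-- The first index past `M` at which `a` reaches `x` works.
theorem exists_gt_mem_Ico_of_sub_lt {a : ℕ → ℝ} {M : ℕ} {x δ : ℝ}
    (hstep : ∀ n ≥ M, a (n + 1) - a n < δ) (hM : a M < x) (hx : ∃ m ≥ M, x ≤ a m) :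
    ∃ n > M, a n ∈ Set.Ico x (x + δ) := by
  classical
  have hex : ∃ k, x ≤ a (M + k) := by
    obtain ⟨m, hmM, hm⟩ := hx
    exact ⟨m - M, by rwa [Nat.add_sub_cancel' hmM]⟩
  set k := Nat.find hex
  have hk : x ≤ a (M + k) := Nat.find_spec hex
  have hk_pos : 0 < k := Nat.pos_of_ne_zero fun h0 => by
    rw [h0, add_zero] at hk
    exact hk.not_gt hM
  have hprev : a (M + (k - 1)) < x := not_le.mp (Nat.find_min hex (Nat.sub_lt hk_pos one_pos))
  have hlast : a (M + k) - a (M + (k - 1)) < δ := by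
    have := hstep (M + (k - 1)) (Nat.le_add_right _ _)
    rwa [show M + (k - 1) + 1 = M + k by omega] at this
  exact ⟨M + k, by omega, hk, by linarith⟩

/-- The `k = 0` case of Lemma 5.1 (iii) of the paper: if `a(n) → ∞` and
`a(n+1) − a(n) → 0`, then the range of `⌊a(n)⌋` is a cofinite subset of `ℕ`. -/
theorem stmt_13 (a : ℕ → ℝ)
    (ha : Tendsto a atTop atTop)
    (hdiff : Tendsto (fun n => a (n + 1) - a n) atTop (nhds 0)) :
    ∃ N₀ : ℕ, ∀ N : ℕ, N₀ ≤ N → ∃ n : ℕ, 1 ≤ n ∧ ⌊a n⌋ = (N : ℤ) := by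
  obtain ⟨M, hM⟩ := eventually_atTop.mp (hdiff.eventually (gt_mem_nhds one_pos))
  refine ⟨⌊a M⌋₊ + 1, fun N hN => ?_⟩
  have haM : a M < N := (Nat.lt_floor_add_one (a M)).trans_le (by exact_mod_cast hN)
  have hreach : ∃ m ≥ M, (N : ℝ) ≤ a m :=
    ((eventually_ge_atTop M).and (ha.eventually_ge_atTop (N : ℝ))).exists
  obtain ⟨n, hnM, hn⟩ := exists_gt_mem_Ico_of_sub_lt hM haM hreach
  refine ⟨n, by omega, Int.floor_eq_iff.mpr ?_⟩
  exact_mod_cast hn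
end

section
/- Let r ≥ 1 and k > j ≥ 1 be integers, and let l_1, …, l_r and h_1, …, h_r be integers. If the polynomials P_k(X) = Σ_{i=1}^{r} l_i·(X + h_i)^k and P_j(X) = Σ_{i=1}^{r} l_i·(X + h_i)^j are both nonzero, then deg P_j < deg P_k. -/
open Polynomial Finset

/-!
By the binomial theorem the coefficient of `X ^ t` in `∑ i, l i * (X + h i) ^ m` is
`(m choose t) * S (m - t)`, where `S n = ∑ i, l i * h i ^ n`. So if `d` is the least index with
`S d ≠ 0`, the polynomial has degree exactly `m - d` for every `m ≥ d` and vanishes for `m < d`;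
in particular its degree grows strictly with `m` once it is nonzero.
-/

namespace Polynomial

section ShiftedPowSum

variable {R ι : Type*} [CommRing R] (s : Finset ι) (l h : ι → R)

noncomputable def shiftedPowSum (m : ℕ) : R[X] := ∑ i ∈ s, C (l i) * (X + C (h i)) ^ m

def weightedPowSum (n : ℕ) : R := ∑ i ∈ s, l i * h i ^ n

theorem coeff_shiftedPowSum (m t : ℕ) :
    (shiftedPowSum s l h m).coeff t = (m.choose t : R) * weightedPowSum s l h (m - t) := by
  simp only [shiftedPowSum, weightedPowSum, finsetSum_coeff, coeff_C_mul, coeff_X_add_C_pow,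
    mul_sum]
  exact sum_congr rfl fun _ _ => by ring

theorem shiftedPowSum_eq_zero {m : ℕ} (hS : ∀ n ≤ m, weightedPowSum s l h n = 0) :
    shiftedPowSum s l h m = 0 := by
  ext t
  rw [coeff_shiftedPowSum, hS _ (Nat.sub_le m t), mul_zero, coeff_zero]

theorem degree_shiftedPowSum [IsDomain R] [CharZero R] {d m : ℕ}
    (hlt : ∀ n < d, weightedPowSum s l h n = 0) (hd : weightedPowSum s l h d ≠ 0) (hdm : d ≤ m) :
    (shiftedPowSum s l h m).degree = (m - d : ℕ) := by
  apply le_antisymm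
  · refine degree_le_iff_coeff_zero _ _ |>.mpr fun t ht => ?_
    rw [Nat.cast_lt] at ht
    rw [coeff_shiftedPowSum]
    rcases le_or_gt t m with htm | htm
    · rw [hlt _ (by omega), mul_zero]
    · rw [Nat.choose_eq_zero_of_lt htm, Nat.cast_zero, zero_mul]
  · apply le_degree_of_ne_zero
    rw [coeff_shiftedPowSum, Nat.sub_sub_self hdm]
    exact mul_ne_zero (Nat.cast_ne_zero.mpr (Nat.choose_pos (Nat.sub_le m d)).ne') hd

theorem degree_shiftedPowSum_lt [IsDomain R] [CharZero R] {j k : ℕ} (hjk : j < k)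
    (hj : shiftedPowSum s l h j ≠ 0) :
    (shiftedPowSum s l h j).degree < (shiftedPowSum s l h k).degree := by
  classical
  have hex : ∃ n ≤ j, weightedPowSum s l h n ≠ 0 := by
    by_contra! hS
    exact hj (shiftedPowSum_eq_zero s l h hS)
  let d := Nat.find hex
  have hdj : d ≤ j := (Nat.find_spec hex).1
  have hlt : ∀ n < d, weightedPowSum s l h n = 0 := fun n hn => by
    by_contra hS
    exact Nat.find_min hex hn ⟨by omega, hS⟩
  rw [degree_shiftedPowSum s l h hlt (Nat.find_spec hex).2 hdj,
    degree_shiftedPowSum s l h hlt (Nat.find_spec hex).2 (by omega), Nat.cast_lt]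
  omega

end ShiftedPowSum

end Polynomial

theorem stmt_16_general (r : ℕ) (k j : ℕ) (hjk : j < k)
    (l h : Fin r → ℤ)
    (hPj : (∑ i, C (l i) * (X + C (h i)) ^ j : Polynomial ℤ) ≠ 0) :
    (∑ i, C (l i) * (X + C (h i)) ^ j : Polynomial ℤ).degree <
      (∑ i, C (l i) * (X + C (h i)) ^ k : Polynomial ℤ).degree :=
  degree_shiftedPowSum_lt univ l h hjk hPj

/-- The degree comparison used in Lemma 6.6 of the paper. -/
theorem stmt_16 (r : ℕ) (hr : 1 ≤ r) (k j : ℕ) (hj : 1 ≤ j) (hjk : j < k)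
    (l h : Fin r → ℤ)
    (hPk : (∑ i, C (l i) * (X + C (h i)) ^ k : Polynomial ℤ) ≠ 0)
    (hPj : (∑ i, C (l i) * (X + C (h i)) ^ j : Polynomial ℤ) ≠ 0) :
    (∑ i, C (l i) * (X + C (h i)) ^ j : Polynomial ℤ).degree <
      (∑ i, C (l i) * (X + C (h i)) ^ k : Polynomial ℤ).degree :=
  stmt_16_general r k j hjk l h hPj
end

section
/- Let k, r, m be positive integers, let q be a polynomial with integer coefficients of degree at most k−1, and set p(X) = m·X^k + q(X). Let l_1, …, l_r and h_1, …, h_r be integers and suppose that the polynomial P_k(X) = Σ_{i=1}^{r} l_i·(X + h_i)^k is nonzero. Then the polynomial Σ_{i=1}^{r} l_i·p(X + h_i) is nonzero, has the same degree as P_k, and its leading coefficient equals m times the leading coefficient of P_k. -/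
/-!
The map `T f = ∑ i, lᵢ • f(X + hᵢ)` is linear and commutes with differentiation. Differentiating
`T (X ^ k)` exactly `k - s` times therefore gives `k! / s! • T (X ^ s)`, so for `s < k` the
polynomial `T (X ^ s)` has degree strictly below that of `T (X ^ k)`. By linearity the same holds
for `T q` whenever `deg q < k`, and in `T p = m • T (X ^ k) + T q` the first term dominates.
-/

open Polynomial Finset

namespace Polynomial

variable {R : Type*} [CommRing R]

theorem derivative_taylor (r : R) (f : R[X]) :
    derivative (taylor r f) = taylor r (derivative f) := by
  rw [taylor_apply, taylor_apply, derivative_comp, derivative_X_add_C, one_mul]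

theorem commute_derivative_taylor (r : R) :
    Commute (derivative : Module.End R R[X]) (taylor r) :=
  LinearMap.ext (derivative_taylor r)

theorem degree_iterate_derivative_le (p : R[X]) (n : ℕ) :
    (derivative^[n] p).degree ≤ p.degree := by
  induction n with
  | zero => rfl
  | succ n ih => exact (Function.iterate_succ_apply' derivative n p ▸ degree_derivative_le).trans ih

theorem degree_iterate_derivative_lt {p : R[X]} (hp : p ≠ 0) {n : ℕ} (hn : 0 < n) :
    (derivative^[n] p).degree < p.degree := by
  obtain ⟨n, rfl⟩ := Nat.exists_eq_add_of_lt hn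
  rw [zero_add, Function.iterate_succ_apply]
  exact (degree_iterate_derivative_le _ n).trans_lt (degree_derivative_lt hp)

section shiftCombination

variable {ι : Type*} [Fintype ι] (l h : ι → R)

noncomputable def shiftCombination : Module.End R R[X] :=
  ∑ i, l i • taylor (h i)

theorem shiftCombination_apply (f : R[X]) :
    shiftCombination l h f = ∑ i, C (l i) * f.comp (X + C (h i)) := by
  simp [shiftCombination, taylor_apply, smul_eq_C_mul]

theorem shiftCombination_X_pow (k : ℕ) :
    shiftCombination l h (X ^ k) = ∑ i, C (l i) * (X + C (h i)) ^ k := by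
  simp [shiftCombination_apply]

theorem commute_derivative_shiftCombination :
    Commute (derivative : Module.End R R[X]) (shiftCombination l h) :=
  Commute.sum_right _ _ _ fun i _ =>
    (commute_derivative_taylor (h i)).smul_right (l i)

variable {l h} [IsDomain R] [CharZero R]

theorem degree_shiftCombination_X_pow_lt {s k : ℕ} (hsk : s < k)
    (hk : shiftCombination l h (X ^ k) ≠ 0) :
    (shiftCombination l h (X ^ s)).degree < (shiftCombination l h (X ^ k)).degree := by
  set T := shiftCombination l h
  have hc : (k.descFactorial (k - s) : R) ≠ 0 :=
    Nat.cast_ne_zero.mpr (Nat.descFactorial_pos.mpr (Nat.sub_le k s)).ne'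
  have hderiv : derivative^[k - s] (T (X ^ k)) = C (k.descFactorial (k - s) : R) * T (X ^ s) := by
    rw [← Module.End.pow_apply, ← Module.End.mul_apply,
      ((commute_derivative_shiftCombination l h).pow_left (k - s)).eq, Module.End.mul_apply,
      Module.End.pow_apply, iterate_derivative_X_pow_eq_smul, Nat.sub_sub_self hsk.le, map_smul,
      smul_eq_C_mul]
  calc (T (X ^ s)).degree = (derivative^[k - s] (T (X ^ k))).degree := by
        rw [hderiv, degree_C_mul hc]
    _ < (T (X ^ k)).degree := degree_iterate_derivative_lt hk (Nat.sub_pos_of_lt hsk)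

theorem degree_shiftCombination_lt {f : R[X]} {k : ℕ} (hf : f.degree < k)
    (hk : shiftCombination l h (X ^ k) ≠ 0) :
    (shiftCombination l h f).degree < (shiftCombination l h (X ^ k)).degree := by
  rw [f.as_sum_support_C_mul_X_pow, map_sum]
  refine (degree_sum_le _ _).trans_lt ((Finset.sup_lt_iff ?_).mpr fun n hn => ?_)
  · exact bot_lt_iff_ne_bot.mpr (degree_eq_bot.not.mpr hk)
  · have hnk : n < k := by exact_mod_cast (le_degree_of_mem_supp n hn).trans_lt hf
    rw [← smul_eq_C_mul, map_smul]
    exact (degree_smul_le _ _).trans_lt (degree_shiftCombination_X_pow_lt hnk hk)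

theorem degree_shiftCombination_lt_C_mul {a : R} (ha : a ≠ 0) {f : R[X]} {k : ℕ}
    (hf : f.degree < k) (hk : shiftCombination l h (X ^ k) ≠ 0) :
    (shiftCombination l h f).degree < (C a * shiftCombination l h (X ^ k)).degree := by
  rw [degree_C_mul ha]
  exact degree_shiftCombination_lt hf hk

theorem degree_shiftCombination_C_mul_X_pow_add {a : R} (ha : a ≠ 0) {q : R[X]} {k : ℕ}
    (hq : q.degree < k) (hk : shiftCombination l h (X ^ k) ≠ 0) :
    (shiftCombination l h (C a * X ^ k + q)).degree = (shiftCombination l h (X ^ k)).degree := by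
  rw [map_add, ← smul_eq_C_mul, map_smul, smul_eq_C_mul,
    degree_add_eq_left_of_degree_lt (degree_shiftCombination_lt_C_mul ha hq hk), degree_C_mul ha]

theorem leadingCoeff_shiftCombination_C_mul_X_pow_add {a : R} (ha : a ≠ 0) {q : R[X]} {k : ℕ}
    (hq : q.degree < k) (hk : shiftCombination l h (X ^ k) ≠ 0) :
    (shiftCombination l h (C a * X ^ k + q)).leadingCoeff =
      a * (shiftCombination l h (X ^ k)).leadingCoeff := by
  rw [map_add, ← smul_eq_C_mul, map_smul, smul_eq_C_mul,
    leadingCoeff_add_of_degree_lt' (degree_shiftCombination_lt_C_mul ha hq hk),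
    leadingCoeff_mul, leadingCoeff_C]

end shiftCombination
end Polynomial

theorem stmt_17_general (k r m : ℕ) (hk : 1 ≤ k) (hm : 1 ≤ m)
    (q : Polynomial ℤ) (hq : q.degree ≤ (k - 1 : ℕ))
    (p : Polynomial ℤ) (hp : p = C (m : ℤ) * X ^ k + q)
    (l h : Fin r → ℤ)
    (hPk : (∑ i, C (l i) * (X + C (h i)) ^ k : Polynomial ℤ) ≠ 0) :
    (∑ i, C (l i) * p.comp (X + C (h i)) : Polynomial ℤ) ≠ 0 ∧
    (∑ i, C (l i) * p.comp (X + C (h i)) : Polynomial ℤ).degree =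
      (∑ i, C (l i) * (X + C (h i)) ^ k : Polynomial ℤ).degree ∧
    (∑ i, C (l i) * p.comp (X + C (h i)) : Polynomial ℤ).leadingCoeff =
      (m : ℤ) * (∑ i, C (l i) * (X + C (h i)) ^ k : Polynomial ℤ).leadingCoeff := by
  have hm0 : (m : ℤ) ≠ 0 := by positivity
  have hqk : q.degree < k := hq.trans_lt (by exact_mod_cast Nat.sub_one_lt_of_lt hk)
  rw [← shiftCombination_X_pow] at hPk ⊢
  rw [← shiftCombination_apply, hp]
  have hdeg := degree_shiftCombination_C_mul_X_pow_add hm0 hqk hPk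
  refine ⟨?_, hdeg, leadingCoeff_shiftCombination_C_mul_X_pow_add hm0 hqk hPk⟩
  rw [← degree_ne_bot, hdeg, degree_ne_bot]
  exact hPk

/-- Lemma 6.6 of the paper: the leading coefficient of `∑ i, lᵢ · p(X + hᵢ)`,
where `p(X) = m·X^k + q(X)` with `deg q ≤ k − 1`, equals `m` times the leading
coefficient of `∑ i, lᵢ · (X + hᵢ)^k`. -/
theorem stmt_17 (k r m : ℕ) (hk : 1 ≤ k) (hr : 1 ≤ r) (hm : 1 ≤ m)
    (q : Polynomial ℤ) (hq : q.degree ≤ (k - 1 : ℕ))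
    (p : Polynomial ℤ) (hp : p = C (m : ℤ) * X ^ k + q)
    (l h : Fin r → ℤ)
    (hPk : (∑ i, C (l i) * (X + C (h i)) ^ k : Polynomial ℤ) ≠ 0) :
    (∑ i, C (l i) * p.comp (X + C (h i)) : Polynomial ℤ) ≠ 0 ∧
    (∑ i, C (l i) * p.comp (X + C (h i)) : Polynomial ℤ).degree =
      (∑ i, C (l i) * (X + C (h i)) ^ k : Polynomial ℤ).degree ∧
    (∑ i, C (l i) * p.comp (X + C (h i)) : Polynomial ℤ).leadingCoeff =
      (m : ℤ) * (∑ i, C (l i) * (X + C (h i)) ^ k : Polynomial ℤ).leadingCoeff :=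
  stmt_17_general k r m hk hm q hq p hp l h hPk
end
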